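/- Let A be a complete set such that A ∩ P^𝒞 is |A|-compact, and let p(x̄) be a type over A of cardinality < |A|. Then there is a complete type p*(x̄) ∈ S_*(A) extending p. -/

import Mathlib

open FirstOrder Set Cardinal

universe u

namespace OverP

/-- `inP P m` says that the element `m` satisfies the monadic predicate `P`. -/
def inP {L : FirstOrder.Language.{u, u}} {M : Type u} [L.Structure M]
    (P : L.Relations 1) (m : M) : Prop :=
  FirstOrder.Language.Structure.RelMap P ![m]

/-- The set of realizations of the monadic predicate `P` in the monster model. -/
def Pset {L : FirstOrder.Language.{u, u}} {M : Type u} [L.Structure M]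
    (P : L.Relations 1) : Set M :=
  {m : M | inP P m}

/-- The cardinal `|T|` of the theory, i.e. `max ℵ₀ |L|`. -/
noncomputable def cardT (L : FirstOrder.Language.{u, u}) : Cardinal.{u} := max ℵ₀ L.card

/-- An instance of a formula with `n` free variables and parameters from the monster model. -/
structure Inst (L : FirstOrder.Language.{u, u}) (M : Type u) (n : ℕ) : Type u where
  k : ℕ
  φ : L.Formula (Fin n ⊕ Fin k)
  par : Fin k → M

/-- The tuple `c` realizes the formula instance `ι`. -/
def Inst.RealizedBy {L : FirstOrder.Language.{u, u}} {M : Type u} [L.Structure M] {n : ℕ}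
    (ι : Inst L M n) (c : Fin n → M) : Prop :=
  ι.φ.Realize (Sum.elim c ι.par)

/-- All parameters of the instance `ι` lie in the set `A`. -/
def Inst.overSet {L : FirstOrder.Language.{u, u}} {M : Type u} {n : ℕ}
    (ι : Inst L M n) (A : Set M) : Prop :=
  ∀ i, ι.par i ∈ A

/-- The complete type of the tuple `c` over the set `A` (as the set of all formula
instances over `A` realized by `c`). -/
def typeOver {L : FirstOrder.Language.{u, u}} {M : Type u} [L.Structure M]
    (A : Set M) {n : ℕ} (c : Fin n → M) : Set (Inst L M n) :=
  {ι | ι.overSet A ∧ ι.RealizedBy c}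

/-- `A` is a complete set: if `𝒞 ⊨ (∃ x̄ ⊆ P) ψ(x̄, b̄)` for parameters `b̄ ⊆ A`, then
witnesses can be found inside `P ∩ A`. -/
def IsComplete {L : FirstOrder.Language.{u, u}} {M : Type u} [L.Structure M]
    (P : L.Relations 1) (A : Set M) : Prop :=
  ∀ (n k : ℕ) (ψ : L.Formula (Fin n ⊕ Fin k)) (b : Fin k → M), (∀ i, b i ∈ A) →
    (∃ x : Fin n → M, (∀ i, inP P (x i)) ∧ ψ.Realize (Sum.elim x b)) →
    ∃ a : Fin n → M, (∀ i, a i ∈ A ∧ inP P (a i)) ∧ ψ.Realize (Sum.elim a b)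

/-- `StarFam P A c` says that the type `tp(c̄/A)` belongs to `S_*(A)`, witnessed by the
realization `c̄` itself:  `P ∩ (A ∪ c̄) = P ∩ A` and `A ∪ c̄` is complete. -/
def StarFam {L : FirstOrder.Language.{u, u}} {M : Type u} [L.Structure M]
    (P : L.Relations 1) (A : Set M) {ι : Type*} (c : ι → M) : Prop :=
  (∀ i, inP P (c i) → c i ∈ A) ∧ IsComplete P (A ∪ Set.range c)

/-- `S_*(A)`: the set of complete types over `A` in `n` variables, orthogonal to `P`. -/
def SStar {L : FirstOrder.Language.{u, u}} {M : Type u} [L.Structure M]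
    (P : L.Relations 1) (A : Set M) (n : ℕ) : Set (Set (Inst L M n)) :=
  {p | ∃ c : Fin n → M, StarFam P A c ∧ p = typeOver A c}

/-- The cardinality `|S_*(A)|` (summed over all finite tuple lengths). -/
def cardSStar {L : FirstOrder.Language.{u, u}} {M : Type u} [L.Structure M]
    (P : L.Relations 1) (A : Set M) : Cardinal.{u} :=
  #(Σ n : ℕ, SStar P A n)

/-- `A ≡ B`: the sets `A` and `B` realize the same theory with parameters, i.e. there is
an elementary bijection between them. -/
def ElemEquiv (L : FirstOrder.Language.{u, u}) {M : Type u} [L.Structure M]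
    (A B : Set M) : Prop :=
  ∃ f : A → B, Function.Bijective f ∧
    ∀ (n : ℕ) (φ : L.Formula (Fin n)) (a : Fin n → A),
      φ.Realize (fun i => (a i : M)) ↔ φ.Realize (fun i => (f (a i) : M))

/-- A complete set `A` is stable if `|S_*(A')| ≤ |A'| ^ |T|` for every `A' ≡ A`. -/
def IsStableSet {L : FirstOrder.Language.{u, u}} {M : Type u} [L.Structure M]
    (P : L.Relations 1) (A : Set M) : Prop :=
  IsComplete P A ∧ ∀ B : Set M, ElemEquiv L A B → cardSStar P B ≤ #B ^ cardT L

/-- `A` is `λ`-compact: every partial type over `A` of size `< λ` (consistent, i.e.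
realized in the monster model) is realized in `A`. -/
def IsCompactIn (L : FirstOrder.Language.{u, u}) {M : Type u} [L.Structure M]
    (A : Set M) (lam : Cardinal.{u}) : Prop :=
  ∀ (n : ℕ) (p : Set (Inst L M n)), #p < lam → (∀ ι ∈ p, ι.overSet A) →
    (∃ c : Fin n → M, ∀ ι ∈ p, ι.RealizedBy c) →
    ∃ a : Fin n → M, (∀ i, a i ∈ A) ∧ ∀ ι ∈ p, ι.RealizedBy a

/-- A set is saturated when it is `|A|`-compact. -/
def IsSaturatedSet (L : FirstOrder.Language.{u, u}) {M : Type u} [L.Structure M]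
    (A : Set M) : Prop :=
  IsCompactIn L A #A

/-- The structure induced on a subset of `M` (the language is relational). -/
def setStructure (L : FirstOrder.Language.{u, u}) {M : Type u} [L.Structure M]
    [L.IsRelational] (B : Set M) : L.Structure B where
  funMap := fun f _ => isEmptyElim f
  RelMap := fun r x => FirstOrder.Language.Structure.RelMap r (fun i => (x i : M))

/-- Satisfaction of a formula in the induced structure on a subset `B ⊆ M`. -/
def RealizeIn {L : FirstOrder.Language.{u, u}} {M : Type u} [L.Structure M]
    [L.IsRelational] (B : Set M) {α : Type} (φ : L.Formula α) (v : α → B) : Prop :=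
  letI := setStructure L B
  φ.Realize v

/-- Hypothesis 1: (1) every relation on `P^𝒞` definable in `𝒞` is definable (without
parameters) in `𝒞 | P^𝒞`; (2) every type over `P^𝒞` is definable. -/
def Hyp1 {L : FirstOrder.Language.{u, u}} {M : Type u} [L.Structure M]
    [L.IsRelational] (P : L.Relations 1) : Prop :=
  (∀ (n k : ℕ) (ψ : L.Formula (Fin n ⊕ Fin k)) (b : Fin k → M),
    ∃ θ : L.Formula (Fin n), ∀ a : Fin n → (Pset P : Set M),
      ψ.Realize (Sum.elim (fun i => (a i : M)) b) ↔ RealizeIn (Pset P : Set M) θ a) ∧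
  (∀ (n : ℕ) (c : Fin n → M) (k : ℕ) (ψ : L.Formula (Fin n ⊕ Fin k)),
    ∃ (l : ℕ) (θ : L.Formula (Fin k ⊕ Fin l)) (e : Fin l → M),
      (∀ i, inP P (e i)) ∧
      ∀ b : Fin k → M, (∀ i, inP P (b i)) →
        (ψ.Realize (Sum.elim c b) ↔ θ.Realize (Sum.elim b e)))

/-- The theory has quantifier elimination: every formula is equivalent to an atomic one. -/
def HypQE (L : FirstOrder.Language.{u, u}) (M : Type u) [L.Structure M] : Prop :=
  ∀ (n : ℕ) (φ : L.Formula (Fin n)), ∃ θ : L.Formula (Fin n),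
    FirstOrder.Language.BoundedFormula.IsAtomic θ ∧ ∀ v : Fin n → M, φ.Realize v ↔ θ.Realize v

/-- Hypothesis 2: every model of `T` (elementary submodel of the monster) is a stable set. -/
def Hyp2 {L : FirstOrder.Language.{u, u}} {M : Type u} [L.Structure M]
    (P : L.Relations 1) : Prop :=
  ∀ S : L.ElementarySubstructure M, IsStableSet P (S : Set M)

/-- The set-theoretic assumption: there are arbitrarily large `λ` with `λ^{<λ} = λ`. -/
def HypST : Prop :=
  ∀ κ : Cardinal.{u}, ∃ lam : Cardinal.{u}, κ ≤ lam ∧ lam ^< lam = lam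

/-- `A ⊆_t B`: every formula with parameters in `A` realized by a tuple from `B` is
realized by a tuple from `A` (a Tarski–Vaught style condition). -/
def SubT (L : FirstOrder.Language.{u, u}) {M : Type u} [L.Structure M]
    (A B : Set M) : Prop :=
  ∀ (n k : ℕ) (ψ : L.Formula (Fin n ⊕ Fin k)) (a : Fin k → M) (b : Fin n → M),
    (∀ i, a i ∈ A) → (∀ i, b i ∈ B) → ψ.Realize (Sum.elim b a) →
    ∃ b' : Fin n → M, (∀ i, b' i ∈ A) ∧ ψ.Realize (Sum.elim b' a)

/-- `(Θ, e)` defines the `ψ`-type of `c̄` over `D`. -/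
def Defines {L : FirstOrder.Language.{u, u}} {M : Type u} [L.Structure M] {n k l : ℕ}
    (ψ : L.Formula (Fin n ⊕ Fin k)) (Θ : L.Formula (Fin k ⊕ Fin l))
    (e : Fin l → M) (c : Fin n → M) (D : Set M) : Prop :=
  ∀ a : Fin k → M, (∀ i, a i ∈ D) →
    (ψ.Realize (Sum.elim c a) ↔ Θ.Realize (Sum.elim a e))

/-- `tp(c'/B)` is a stationarization of `tp(c/A)`: for every `ψ` some definition over `A`
defines both `ψ`-types. -/
def IsStationarization {L : FirstOrder.Language.{u, u}} {M : Type u} [L.Structure M]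
    (A B : Set M) {n : ℕ} (c c' : Fin n → M) : Prop :=
  ∀ (k : ℕ) (ψ : L.Formula (Fin n ⊕ Fin k)),
    ∃ (l : ℕ) (Θ : L.Formula (Fin k ⊕ Fin l)) (e : Fin l → M),
      (∀ i, e i ∈ A) ∧ Defines ψ Θ e c A ∧ Defines ψ Θ e c' B

/-- `c` and `d` (families indexed by `ι`) realize the same type over `A`. -/
def SameTypeOver (L : FirstOrder.Language.{u, u}) {M : Type u} [L.Structure M]
    (A : Set M) {ι : Type*} (c d : ι → M) : Prop :=
  ∀ (n k : ℕ) (φ : L.Formula (Fin n ⊕ Fin k)) (s : Fin n → ι) (a : Fin k → M),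
    (∀ i, a i ∈ A) →
    (φ.Realize (Sum.elim (c ∘ s) a) ↔ φ.Realize (Sum.elim (d ∘ s) a))

/-- `f` is a partial elementary map with domain `D`. -/
def IsElemMap (L : FirstOrder.Language.{u, u}) {M : Type u} [L.Structure M]
    (D : Set M) (f : D → M) : Prop :=
  ∀ (n : ℕ) (φ : L.Formula (Fin n)) (d : Fin n → D),
    φ.Realize (fun i => (d i : M)) ↔ φ.Realize (fun i => f (d i))

/-- A set `Δ₁` of formulas `ψ(x̄, ȳ)` with `x̄` of length `n`. -/
abbrev Delta1 (L : FirstOrder.Language.{u, u}) (n : ℕ) :=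
  Set (Σ k : ℕ, L.Formula (Fin n ⊕ Fin k))

/-!
Let `c̄` realize `p`, and split it into the coordinates lying in `P` and the rest. By Hyp1, each
`φ(x̄, ā) ∈ p`, with the non-`P` coordinates fixed to those of `c̄`, agrees on `P` with a
parameter-free formula. These fewer than `|A|` formulas are realized by the `P`-part of `c̄`,
hence by some tuple from `A ∩ P`; putting it in place of the `P`-part gives a realization of `p`
all of whose `P`-coordinates lie in `A`. Finally, by Hyp1 again, every superset of a complete set
is complete.
-/

open Language

variable {L : FirstOrder.Language.{u, u}} {M : Type u} [L.Structure M]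

section Relativize

def relativize (P : L.Relations 1) :
    ∀ {α : Type*} {k : ℕ}, L.BoundedFormula α k → L.BoundedFormula α k
  | _, _, .falsum => .falsum
  | _, _, .equal t₁ t₂ => .equal t₁ t₂
  | _, _, .rel R ts => .rel R ts
  | _, _, .imp φ ψ => .imp (relativize P φ) (relativize P ψ)
  | _, k, .all φ => .all ((P.boundedFormula₁ (.var (.inr (Fin.last k)))).imp (relativize P φ))

variable [L.IsRelational]

theorem coe_realize_term_setStructure (B : Set M) {γ : Type*} (t : L.Term γ) (w : γ → B) :
    ((letI := setStructure L B; t.realize w : B) : M) = t.realize (Subtype.val ∘ w) := by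
  cases t with
  | var => rfl
  | func f => exact isEmptyElim f

theorem realize_relativize (P : L.Relations 1) {α : Type} {k : ℕ}
    (φ : L.BoundedFormula α k) (v : α → (Pset P : Set M)) (xs : Fin k → (Pset P : Set M)) :
    (letI := setStructure L (Pset P : Set M); φ.Realize v xs) ↔
      (relativize P φ).Realize (Subtype.val ∘ v) (Subtype.val ∘ xs) := by
  let := setStructure L (Pset P : Set M)
  induction φ with
  | falsum => simp only [relativize, BoundedFormula.Realize]
  | equal t₁ t₂ =>
    simp only [relativize, BoundedFormula.Realize, ← Sum.comp_elim,
      ← coe_realize_term_setStructure, Subtype.val_inj]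
  | rel R ts =>
    simp only [relativize, BoundedFormula.Realize, ← Sum.comp_elim,
      ← coe_realize_term_setStructure]
    exact Iff.rfl
  | imp φ ψ ihφ ihψ =>
    simp only [relativize, BoundedFormula.realize_imp, ihφ, ihψ]
  | all φ ih =>
    simp only [relativize, BoundedFormula.realize_all, BoundedFormula.realize_imp,
      BoundedFormula.realize_rel₁, Term.realize_var, Sum.elim_inr, Fin.snoc_last, ih,
      Fin.comp_snoc]
    exact ⟨fun h y hy => h ⟨y, hy⟩, fun h x => h x x.2⟩

theorem realizeIn_iff_realize_relativize (P : L.Relations 1) {β : Type} (θ : L.Formula β)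
    (w : β → (Pset P : Set M)) :
    RealizeIn (Pset P : Set M) θ w ↔ Formula.Realize (relativize P θ) (Subtype.val ∘ w) := by
  refine (realize_relativize P θ w default).trans (iff_of_eq (congrArg _ ?_))
  exact Subsingleton.elim _ _

end Relativize

section Hyp1

variable [L.IsRelational] {P : L.Relations 1}

theorem Hyp1.exists_formula_realize_iff (h1 : Hyp1 (M := M) P) {m : ℕ} {β : Type*} [Finite β]
    (ψ : L.Formula (Fin m ⊕ β)) (b : β → M) :
    ∃ χ : L.Formula (Fin m), ∀ a : Fin m → M, (∀ i, inP P (a i)) →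
      (ψ.Realize (Sum.elim a b) ↔ χ.Realize a) := by
  obtain ⟨k, ⟨e⟩⟩ := Finite.exists_equiv_fin β
  obtain ⟨θ, hθ⟩ := h1.1 m k (ψ.relabel (Sum.map id e)) (b ∘ e.symm)
  refine ⟨relativize P θ, fun a ha => ?_⟩
  have := hθ fun i => ⟨a i, ha i⟩
  rwa [realizeIn_iff_realize_relativize, Formula.realize_relabel, Sum.elim_comp_map,
    Function.comp_assoc, e.symm_comp_self, Function.comp_id, Function.comp_id] at this

/-- Hyp1 turns "`ψ(x̄, b̄)` has a solution in `P`" into a parameter-free statement, so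
witnesses found in `A ∩ P` serve every larger set. -/
theorem IsComplete.mono (h1 : Hyp1 (M := M) P) {A B : Set M} (hA : IsComplete P A)
    (hAB : A ⊆ B) : IsComplete P B := by
  rintro n k ψ b - ⟨x, hxP, hx⟩
  obtain ⟨χ, hχ⟩ := h1.exists_formula_realize_iff ψ b
  obtain ⟨a, ha, haχ⟩ := hA n 0 (χ.relabel Sum.inl) finZeroElim finZeroElim
    ⟨x, hxP, (Formula.realize_relabel (g := Sum.inl)).2 ((hχ x hxP).1 hx)⟩
  exact ⟨a, fun i => ⟨hAB (ha i).1, (ha i).2⟩,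
    (hχ a fun i => (ha i).2).2 ((Formula.realize_relabel (g := Sum.inl)).1 haχ)⟩

theorem Hyp1.exists_inst_realizedBy_iff (h1 : Hyp1 (M := M) P) {n m : ℕ} {β : Type*}
    [Finite β] (ι : Inst L M n) (σ : Fin n → Fin m ⊕ β) (c : β → M) :
    ∃ J : Inst L M m, J.overSet ∅ ∧ ∀ a : Fin m → M, (∀ i, inP P (a i)) →
      (J.RealizedBy a ↔ ι.RealizedBy (Sum.elim a c ∘ σ)) := by
  obtain ⟨χ, hχ⟩ := h1.exists_formula_realize_iff
    (ι.φ.relabel (Sum.elim (Sum.map id Sum.inl ∘ σ) (Sum.inr ∘ Sum.inr))) (Sum.elim c ι.par)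
  refine ⟨⟨0, χ.relabel Sum.inl, finZeroElim⟩, finZeroElim, fun a ha => ?_⟩
  rw [Inst.RealizedBy, Formula.realize_relabel, Sum.elim_comp_inl, ← hχ a ha,
    Formula.realize_relabel, Inst.RealizedBy]
  refine iff_of_eq (congrArg _ (funext fun | .inl i => ?_ | .inr j => rfl))
  simp only [Function.comp_apply, Sum.elim_inl]
  cases σ i <;> rfl

end Hyp1

section Splice

variable {α : Type*} {n : ℕ} (S : Fin n → Prop) [DecidablePred S]

/-- `Sum.elim a c ∘ spliceIndex S` is `c` with its coordinates in `S` replaced,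
in order, by the entries of `a`. -/
noncomputable def spliceIndex (i : Fin n) : Fin (Fintype.card {i // S i}) ⊕ Fin n :=
  if h : S i then .inl (Fintype.equivFin _ ⟨i, h⟩) else .inr i

variable {S}

theorem elim_comp_spliceIndex_of_not (a : Fin (Fintype.card {i // S i}) → α) (c : Fin n → α)
    {i : Fin n} (hi : ¬S i) : (Sum.elim a c ∘ spliceIndex S) i = c i := by
  simp [spliceIndex, hi]

theorem elim_comp_spliceIndex_mem_range (a : Fin (Fintype.card {i // S i}) → α)
    (c : Fin n → α) {i : Fin n} (hi : S i) : (Sum.elim a c ∘ spliceIndex S) i ∈ range a := by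
  simp [spliceIndex, hi]

variable (S)

theorem elim_comp_spliceIndex_self (c : Fin n → α) :
    Sum.elim (fun j => c ((Fintype.equivFin {i // S i}).symm j)) c ∘ spliceIndex S = c := by
  funext i
  by_cases hi : S i <;> simp [spliceIndex, hi]

end Splice

theorem statement_3_general {L : FirstOrder.Language.{u, u}} {M : Type u} [L.Structure M]
    [L.IsRelational] (P : L.Relations 1) (h1 : Hyp1 (M := M) P)
    (A : Set M) (hA : IsComplete P A) (hcomp : IsCompactIn L (A ∩ Pset P) #A)
    (n : ℕ) (p : Set (Inst L M n))
    (hcons : ∃ c : Fin n → M, ∀ ι ∈ p, ι.RealizedBy c)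
    (hsize : #p < #A) :
    ∃ c : Fin n → M, StarFam P A c ∧ ∀ ι ∈ p, ι.RealizedBy c := by
  classical
  obtain ⟨c, hc⟩ := hcons
  set S : Fin n → Prop := fun i => inP P (c i)
  choose J hJ₀ hJ using fun ι : Inst L M n => h1.exists_inst_realizedBy_iff ι (spliceIndex S) c
  have hcP : ∀ j, inP P (c ((Fintype.equivFin {i // S i}).symm j)) := fun j =>
    ((Fintype.equivFin {i // S i}).symm j).2
  have hJc : ∀ ι ∈ p, (J ι).RealizedBy fun j => c ((Fintype.equivFin {i // S i}).symm j) :=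
    fun ι hι => (hJ ι _ hcP).2 (by rw [elim_comp_spliceIndex_self]; exact hc ι hι)
  obtain ⟨a, haA, ha⟩ := hcomp _ (J '' p) (mk_image_le.trans_lt hsize)
    (by rintro _ ⟨ι, -, rfl⟩ i; exact (hJ₀ ι i).elim)
    ⟨_, by rintro _ ⟨ι, hι, rfl⟩; exact hJc ι hι⟩
  refine ⟨Sum.elim a c ∘ spliceIndex S, ⟨fun i hi => ?_, hA.mono h1 subset_union_left⟩,
    fun ι hι => (hJ ι a fun j => (haA j).2).1 (ha _ ⟨ι, hι, rfl⟩)⟩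
  by_cases hS : S i
  · obtain ⟨j, hj⟩ := elim_comp_spliceIndex_mem_range a c hS
    exact hj ▸ (haA j).1
  · rw [elim_comp_spliceIndex_of_not a c hS] at hi
    exact absurd hi hS

/-- Lemma 3.5: over a complete set `A` with `A ∩ P` being `|A|`-compact,
every type of size `< |A|` over `A` extends to a complete type in `S_*(A)`. -/
theorem statement_3 {L : FirstOrder.Language.{u, u}} {M : Type u} [L.Structure M]
    [L.IsRelational] (P : L.Relations 1) (hQE : HypQE L M) (h1 : Hyp1 (M := M) P)
    (A : Set M) (hA : IsComplete P A) (hcomp : IsCompactIn L (A ∩ Pset P) #A)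
    (n : ℕ) (p : Set (Inst L M n)) (hover : ∀ ι ∈ p, ι.overSet A)
    (hcons : ∃ c : Fin n → M, ∀ ι ∈ p, ι.RealizedBy c)
    (hsize : #p < #A) :
    ∃ c : Fin n → M, StarFam P A c ∧ ∀ ι ∈ p, ι.RealizedBy c :=
  statement_3_general P h1 A hA hcomp n p hcons hsize

end OverP
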